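/- Fix a winner number k with 1 ≤ k ≤ n, a Gini cap g ∈ (0,1), and assume b_{n−k+1} > 0. Then the set {p > 0 : g*_k(p) ≤ g} has a maximum element p*_k; moreover p*_k ∈ [k·b_{n−k+1}, Σ_{i=n−k+1}^n b_i], at price p*_k a feasible allocation with flexible Gini index at most g exists, and for every price p > p*_k there is no feasible allocation with flexible Gini index at most g. -/

import Mathlib

open Finset

/-- The ascending rearrangement of a vector. -/
noncomputable def sortedAsc {n : ℕ} (a : Fin n → ℝ) : Fin n → ℝ :=
  a ∘ Tuple.sort a

/-- The Gini index of an ascending-sorted nonnegative vector `y` on `Fin k`: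
`2 (∑ i, i * y_i) / (k ∑ i, y_i) - (k+1)/k` (with 1-based weights). -/
noncomputable def gini {k : ℕ} (y : Fin k → ℝ) : ℝ :=
  2 * (∑ i : Fin k, (((i : ℕ) : ℝ) + 1) * y i) / (k * ∑ i, y i) - ((k : ℝ) + 1) / k

/-- The flexible Gini index with winner number `k`: the Gini index of the top `k`
entries of the ascending rearrangement of the allocation. -/
noncomputable def flexGini {n : ℕ} (k : ℕ) (a : Fin n → ℝ) : ℝ :=
  if h : k ≤ n then
    gini (fun i : Fin k => sortedAsc a ⟨n - k + i, by have := i.isLt; omega⟩)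
  else 0

/-- Feasibility of allocation `a` for budgets `b`, winner number `k`, price `p`. -/
def Feasible {n : ℕ} (b : Fin n → ℝ) (k : ℕ) (p : ℝ) (a : Fin n → ℝ) : Prop :=
  (∀ i, 0 ≤ a i) ∧ (∑ i, a i = 1) ∧ (∀ i, a i * p ≤ b i) ∧
    n - k ≤ (Finset.univ.filter fun i => a i = 0).card

open Classical in
/-- The minimum flexible Gini index over feasible allocations (`1` if none exists). -/
noncomputable def gStar {n : ℕ} (b : Fin n → ℝ) (k : ℕ) (p : ℝ) : ℝ :=
  if ∃ a, Feasible b k p a then sInf (flexGini k '' {a | Feasible b k p a}) else 1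

/-- The maximum price for winner number `k` under Gini cap `g`. -/
noncomputable def pStar {n : ℕ} (b : Fin n → ℝ) (k : ℕ) (g : ℝ) : ℝ :=
  sSup {p : ℝ | 0 < p ∧ gStar b k p ≤ g}

/-- The Gini mechanism's price: the maximum of `pStar` over allowed winner numbers. -/
noncomputable def pStarK {n : ℕ} (b : Fin n → ℝ) (K : Finset ℕ) (g : ℝ) : ℝ :=
  sSup ((fun k => pStar b k g) '' (K : Set ℕ))

/-- The `(m+1)`-st smallest budget (0-based index `m`). -/
noncomputable def nthSmallest {n : ℕ} (b : Fin n → ℝ) (m : ℕ) : ℝ :=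
  if h : m < n then sortedAsc b ⟨m, h⟩ else 0

/-- The allocation cap `C` at price `p` for winner number `k`. -/
noncomputable def capOf {n : ℕ} (b : Fin n → ℝ) (k : ℕ) (p : ℝ) : ℝ :=
  sInf {C : ℝ | 0 < C ∧
    1 ≤ ∑ i ∈ Finset.univ.filter (fun i : Fin n => n - k ≤ (i : ℕ)),
        min (sortedAsc b i / p) C}

/-- The winner number chosen by the Gini mechanism (ties broken in favor of more winners). -/
noncomputable def mechWinnerNum {n : ℕ} (b : Fin n → ℝ) (K : Finset ℕ) (g : ℝ) : ℕ :=
  sSup {k | k ∈ K ∧ pStar b k g = pStarK b K g}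

/-- The allocation of the Gini mechanism: agents in the bottom `n - k` positions (by budget)
receive `0`; the `k` winners receive `min (bᵢ/p, C)` at the mechanism price `p`. -/
noncomputable def mechAlloc {n : ℕ} (b : Fin n → ℝ) (K : Finset ℕ) (g : ℝ) : Fin n → ℝ :=
  fun i =>
    if ((Tuple.sort b).symm i : ℕ) < n - mechWinnerNum b K g then 0
    else min (b i / pStarK b K g) (capOf b (mechWinnerNum b K g) (pStarK b K g))

/-- Agent `i`'s spending under the Gini mechanism. -/
noncomputable def spend {n : ℕ} (b : Fin n → ℝ) (K : Finset ℕ) (g : ℝ) (i : Fin n) : ℝ :=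
  mechAlloc b K g i * pStarK b K g

/-- Agent `i`'s utility under the Gini mechanism when her valuation is `v`. -/
noncomputable def util {n : ℕ} (b : Fin n → ℝ) (K : Finset ℕ) (g : ℝ) (i : Fin n) (v : ℝ) : ℝ :=
  mechAlloc b K g i * (v - pStarK b K g)

/-!
Sorting an allocation in ascending order preserves feasibility (the budgets are ascending) and
the flexible Gini index, so only ascending allocations matter. For those, the `n - k` zeros sit
in the first `n - k` coordinates, so feasibility is a closed condition on the pair
(price, allocation), and the flexible Gini index is the Gini index of the last `k` coordinates,
which sum to `1`; it is therefore continuous. By compactness the infimum defining `g*_k(p)` is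
attained, so `g*_k(p) ≤ g` exactly when some allocation feasible at `p` has index at most `g`,
and the prices of the compact set of such (price, allocation) pairs have a largest element.
A feasible price is at most the sum of the top `k` budgets, and splitting the coin equally among
the top `k` agents at price `k·b_{n-k+1}` has Gini index `0`.
-/

lemma sortedAsc_eq_self {n : ℕ} {a : Fin n → ℝ} (ha : Monotone a) : sortedAsc a = a := by
  have h : a ∘ Equiv.refl (Fin n) = a ∘ Tuple.sort a :=
    Tuple.comp_sort_eq_comp_iff_monotone.mpr (by simpa using ha)
  simpa [sortedAsc] using h.symm

lemma sortedAsc_le_of_le_of_monotone {n : ℕ} {a c : Fin n → ℝ} (hc : Monotone c)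
    (hac : ∀ i, a i ≤ c i) (i : Fin n) : sortedAsc a i ≤ c i := by
  set σ := Tuple.sort a
  -- `σ` cannot map all of `[i, n)` into `(i, n)`, which is one element smaller.
  obtain ⟨j, hij, hji⟩ : ∃ j, i ≤ j ∧ σ j ≤ i := by
    by_contra! h
    have hsub : (Ici i).image σ ⊆ Ioi i := by
      simpa [Finset.image_subset_iff] using h
    have := card_le_card hsub
    rw [card_image_of_injective _ σ.injective, Fin.card_Ici, Fin.card_Ioi] at this
    omega
  calc sortedAsc a i ≤ sortedAsc a j := Tuple.monotone_sort a hij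
    _ ≤ c (σ j) := hac _
    _ ≤ c i := hc hji

lemma card_filter_sortedAsc_eq_zero {n : ℕ} (a : Fin n → ℝ) :
    #{i | sortedAsc a i = 0} = #{i | a i = 0} :=
  card_equiv (Tuple.sort a) (fun i => by rw [mem_filter]; simp [sortedAsc])

lemma Monotone.le_card_filter_eq_zero_iff {n m : ℕ} {a : Fin n → ℝ} (ha : Monotone a)
    (hnn : ∀ i, 0 ≤ a i) (hm : m ≤ n) :
    m ≤ #{i | a i = 0} ↔ ∀ i : Fin n, (i : ℕ) < m → a i = 0 := by
  have hdown : ∀ i j, j ≤ i → a i = 0 → a j = 0 := fun i j hji hi =>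
    le_antisymm (hi ▸ ha hji) (hnn j)
  refine ⟨fun h i hi => (Fin.lt_card_filter_univ_iff_apply_of_imp _ hdown).mp (by omega),
    fun h => ?_⟩
  by_contra! hlt
  exact lt_irrefl _
    ((Fin.lt_card_filter_univ_iff_apply_of_imp _ hdown).mpr (h ⟨_, hlt.trans_le hm⟩ hlt))

def topIdx {n k : ℕ} (hkn : k ≤ n) (i : Fin k) : Fin n := ⟨n - k + i, by omega⟩

lemma sum_topIdx {M : Type*} [AddCommMonoid M] {n k : ℕ} (hkn : k ≤ n) (f : Fin n → M) :
    ∑ i, f (topIdx hkn i) = ∑ i ∈ univ.filter (fun i : Fin n => n - k ≤ (i : ℕ)), f i :=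
  sum_nbij (topIdx hkn) (fun i _ => by simp [topIdx]; omega)
    (fun i _ j _ h => by simpa [topIdx, Fin.ext_iff] using h)
    (fun j hj => by
      simp only [coe_filter, mem_univ, true_and, Set.mem_ofPred_eq] at hj
      exact ⟨⟨j - (n - k), by omega⟩, by simp, by ext; simp [topIdx]; omega⟩)
    (fun _ _ => rfl)

lemma sum_topIdx_eq_sum {M : Type*} [AddCommMonoid M] {n k : ℕ} (hkn : k ≤ n) {f : Fin n → M}
    (hf : ∀ i : Fin n, (i : ℕ) < n - k → f i = 0) :
    ∑ i, f (topIdx hkn i) = ∑ i, f i := by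
  rw [sum_topIdx, sum_filter_of_ne]
  intro i _ hi
  by_contra! h
  exact hi (hf i h)

lemma Monotone.feasible_iff {n k : ℕ} {b a : Fin n → ℝ} {p : ℝ} (ha : Monotone a) :
    Feasible b k p a ↔ (∀ i, 0 ≤ a i) ∧ ∑ i, a i = 1 ∧ (∀ i, a i * p ≤ b i) ∧
      ∀ i : Fin n, (i : ℕ) < n - k → a i = 0 := by
  unfold Feasible
  constructor
  · rintro ⟨hnn, hsum, hbud, hcard⟩
    exact ⟨hnn, hsum, hbud, (ha.le_card_filter_eq_zero_iff hnn (by omega)).mp hcard⟩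
  · rintro ⟨hnn, hsum, hbud, hzero⟩
    exact ⟨hnn, hsum, hbud, (ha.le_card_filter_eq_zero_iff hnn (by omega)).mpr hzero⟩

lemma Feasible.sortedAsc {n k : ℕ} {b a : Fin n → ℝ} {p : ℝ} (hb : Monotone b) (hp : 0 < p)
    (ha : Feasible b k p a) : Feasible b k p (sortedAsc a) := by
  obtain ⟨hnn, hsum, hbud, hcard⟩ := ha
  refine ⟨fun i => hnn _, ?_, fun i => ?_, by rwa [card_filter_sortedAsc_eq_zero]⟩
  · rw [← hsum]
    exact Equiv.sum_comp (Tuple.sort a) a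
  · have hc : Monotone fun j => b j / p := fun _ _ h => div_le_div_of_nonneg_right (hb h) hp.le
    exact (le_div_iff₀ hp).mp
      (sortedAsc_le_of_le_of_monotone hc (fun j => (le_div_iff₀ hp).mpr (hbud j)) i)

lemma Feasible.sum_topIdx {n k : ℕ} {b a : Fin n → ℝ} {p : ℝ} (hkn : k ≤ n)
    (ha : Monotone a) (hf : Feasible b k p a) : ∑ i, a (topIdx hkn i) = 1 := by
  obtain ⟨-, hsum, -, hzero⟩ := ha.feasible_iff.mp hf
  rw [sum_topIdx_eq_sum hkn hzero, hsum]

lemma Feasible.le_sum_filter {n k : ℕ} {b a : Fin n → ℝ} {p : ℝ} (ha : Monotone a)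
    (hf : Feasible b k p a) :
    p ≤ ∑ i ∈ univ.filter (fun i : Fin n => n - k ≤ (i : ℕ)), b i := by
  obtain ⟨-, hsum, hbud, hzero⟩ := ha.feasible_iff.mp hf
  set top := univ.filter (fun i : Fin n => n - k ≤ (i : ℕ))
  have hsupp : ∑ i ∈ top, a i * p = ∑ i, a i * p := by
    refine sum_filter_of_ne fun i _ hi => ?_
    by_contra! h
    exact hi (by rw [hzero i h, zero_mul])
  calc p = ∑ i ∈ top, a i * p := by rw [hsupp, ← sum_mul, hsum, one_mul]
    _ ≤ ∑ i ∈ top, b i := sum_le_sum fun i _ => hbud i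

lemma continuousOn_gini {k : ℕ} : ContinuousOn (gini (k := k)) {y | ∑ i, y i ≠ 0} := by
  refine ContinuousOn.sub (ContinuousOn.div (by fun_prop) (by fun_prop) fun y hy => ?_)
    continuousOn_const
  have hk : (k : ℝ) ≠ 0 := by
    rintro hk
    obtain rfl := Nat.cast_eq_zero.mp hk
    simp at hy
  exact mul_ne_zero hk hy

lemma sum_fin_val_add_one (k : ℕ) : ∑ i : Fin k, ((i : ℝ) + 1) = k * (k + 1) / 2 := by
  induction k with
  | zero => simp
  | succ k ih =>
    rw [Fin.sum_univ_castSucc]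
    simp only [Fin.val_castSucc, Fin.val_last]
    rw [ih]
    push_cast
    ring

lemma gini_const {k : ℕ} (hk : k ≠ 0) {c : ℝ} (hc : c ≠ 0) :
    gini (fun _ : Fin k => c) = 0 := by
  rw [gini, ← sum_mul, sum_fin_val_add_one, sum_const, card_univ, Fintype.card_fin, nsmul_eq_mul]
  field_simp
  ring

lemma flexGini_of_monotone {n k : ℕ} (hkn : k ≤ n) {a : Fin n → ℝ} (ha : Monotone a) :
    flexGini k a = gini (a ∘ topIdx hkn) := by
  rw [flexGini, dif_pos hkn, sortedAsc_eq_self ha]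
  rfl

lemma flexGini_sortedAsc {n k : ℕ} (a : Fin n → ℝ) :
    flexGini k (sortedAsc a) = flexGini k a := by
  have hsorted : Monotone (sortedAsc a) := Tuple.monotone_sort a
  unfold flexGini
  rw [sortedAsc_eq_self hsorted]

def monotoneFeasibleSet {n : ℕ} (b : Fin n → ℝ) (k : ℕ) : Set (ℝ × (Fin n → ℝ)) :=
  {x | Monotone x.2 ∧ Feasible b k x.1 x.2}

lemma isClosed_monotoneFeasibleSet {n : ℕ} (b : Fin n → ℝ) (k : ℕ) :
    IsClosed (monotoneFeasibleSet b k) := by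
  have hset : monotoneFeasibleSet b k = {x | Monotone x.2} ∩ ((⋂ i, {x | 0 ≤ x.2 i}) ∩
      ({x | ∑ i, x.2 i = 1} ∩ ((⋂ i, {x | x.2 i * x.1 ≤ b i}) ∩
        ⋂ i : Fin n, ⋂ (_ : (i : ℕ) < n - k), {x | x.2 i = 0}))) := by
    ext x
    simp only [monotoneFeasibleSet, Set.mem_ofPred_eq, Set.mem_inter_iff, Set.mem_iInter]
    exact and_congr_right Monotone.feasible_iff
  rw [hset]
  refine (isClosed_monotone.preimage continuous_snd).inter
    ((isClosed_iInter fun i => isClosed_le (by fun_prop) (by fun_prop)).inter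
      ((isClosed_eq (by fun_prop) (by fun_prop)).inter
        ((isClosed_iInter fun i => isClosed_le (by fun_prop) (by fun_prop)).inter
          (isClosed_iInter fun i => isClosed_iInter fun _ =>
            isClosed_eq (by fun_prop) (by fun_prop)))))

lemma isCompact_monotoneFeasibleSet_inter {n : ℕ} (b : Fin n → ℝ) (k : ℕ) {s : Set ℝ}
    (hs : IsCompact s) : IsCompact (Prod.fst ⁻¹' s ∩ monotoneFeasibleSet b k) := by
  refine (hs.prod (isCompact_Icc (a := (0 : Fin n → ℝ)) (b := 1))).of_isClosed_subset
    ((hs.isClosed.preimage continuous_fst).inter (isClosed_monotoneFeasibleSet b k)) ?_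
  rintro x ⟨hxs, -, hnn, hsum, -⟩
  refine ⟨hxs, hnn, fun i => ?_⟩
  calc x.2 i ≤ ∑ j, x.2 j := single_le_sum (fun j _ => hnn j) (mem_univ i)
    _ = 1 := hsum

lemma continuousOn_flexGini_monotoneFeasibleSet {n k : ℕ} (b : Fin n → ℝ) (hkn : k ≤ n) :
    ContinuousOn (fun x : ℝ × (Fin n → ℝ) => flexGini k x.2) (monotoneFeasibleSet b k) := by
  have hgini : ContinuousOn (fun x : ℝ × (Fin n → ℝ) => gini (x.2 ∘ topIdx hkn))
      (monotoneFeasibleSet b k) :=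
    continuousOn_gini.comp (by fun_prop) fun x ⟨hmono, hfeas⟩ => by
      simp [hfeas.sum_topIdx hkn hmono]
  exact hgini.congr fun x ⟨hmono, _⟩ => flexGini_of_monotone hkn hmono

lemma exists_isLeast_flexGini {n k : ℕ} {b : Fin n → ℝ} {p : ℝ} (hb : Monotone b)
    (hp : 0 < p) (hkn : k ≤ n) (hne : ∃ a, Feasible b k p a) :
    ∃ a, Feasible b k p a ∧ IsLeast (flexGini k '' {a | Feasible b k p a}) (flexGini k a) := by
  set K := Prod.fst ⁻¹' {p} ∩ monotoneFeasibleSet b k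
  have hsorted : ∀ a, Feasible b k p a → (p, sortedAsc a) ∈ K := fun a ha =>
    ⟨rfl, Tuple.monotone_sort a, ha.sortedAsc hb hp⟩
  obtain ⟨a₀, ha₀⟩ := hne
  obtain ⟨⟨q, a⟩, ⟨rfl, -, ha⟩, hmin⟩ :=
    (isCompact_monotoneFeasibleSet_inter b k isCompact_singleton).exists_isMinOn
      ⟨_, hsorted a₀ ha₀⟩
      ((continuousOn_flexGini_monotoneFeasibleSet b hkn).mono Set.inter_subset_right)
  refine ⟨a, ha, ⟨a, ha, rfl⟩, ?_⟩
  rintro _ ⟨a', ha', rfl⟩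
  rw [← flexGini_sortedAsc a']
  exact hmin (hsorted a' ha')

lemma gStar_le_iff {n k : ℕ} {b : Fin n → ℝ} {p g : ℝ} (hb : Monotone b) (hp : 0 < p)
    (hkn : k ≤ n) (hg : g < 1) :
    gStar b k p ≤ g ↔ ∃ a, Feasible b k p a ∧ flexGini k a ≤ g := by
  by_cases hne : ∃ a, Feasible b k p a
  · obtain ⟨a, ha, hleast⟩ := exists_isLeast_flexGini hb hp hkn hne
    rw [gStar, if_pos hne, hleast.csInf_eq]
    exact ⟨fun h => ⟨a, ha, h⟩,
      fun ⟨a', ha', h⟩ => (hleast.2 ⟨a', ha', rfl⟩).trans h⟩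
  · rw [gStar, if_neg hne]
    exact iff_of_false hg.not_ge fun ⟨a, ha, _⟩ => hne ⟨a, ha⟩

lemma exists_isGreatest_price {n k : ℕ} {b : Fin n → ℝ} {g : ℝ} (hb : Monotone b)
    (hkn : k ≤ n) (hne : ∃ p, 0 < p ∧ ∃ a, Feasible b k p a ∧ flexGini k a ≤ g) :
    ∃ p a, Monotone a ∧ Feasible b k p a ∧ flexGini k a ≤ g ∧
      IsGreatest {p | 0 < p ∧ ∃ a, Feasible b k p a ∧ flexGini k a ≤ g} p := by
  set B := ∑ i ∈ univ.filter (fun i : Fin n => n - k ≤ (i : ℕ)), b i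
  set K := Prod.fst ⁻¹' Set.Icc 0 B ∩ monotoneFeasibleSet b k
  set T := K ∩ (fun x : ℝ × (Fin n → ℝ) => flexGini k x.2) ⁻¹' Set.Iic g
  have hK : IsCompact K := isCompact_monotoneFeasibleSet_inter b k isCompact_Icc
  have hT : IsCompact T := hK.of_isClosed_subset
    (((continuousOn_flexGini_monotoneFeasibleSet b hkn).mono Set.inter_subset_right
      ).preimage_isClosed_of_isClosed hK.isClosed isClosed_Iic) Set.inter_subset_left
  have hsorted :
      ∀ p, 0 < p → ∀ a, Feasible b k p a → flexGini k a ≤ g → (p, sortedAsc a) ∈ T :=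
    fun p hp a ha hg =>
      have hfeas := ha.sortedAsc hb hp
      ⟨⟨⟨hp.le, hfeas.le_sum_filter (Tuple.monotone_sort a)⟩,
        Tuple.monotone_sort a, hfeas⟩, (flexGini_sortedAsc a).trans_le hg⟩
  obtain ⟨p₀, hp₀, a₀, ha₀, hg₀⟩ := hne
  obtain ⟨_, ⟨⟨p, a⟩, ⟨⟨-, hmono, ha⟩, hg⟩, rfl⟩, hgreatest⟩ :=
    (hT.image continuous_fst).exists_isGreatest ⟨_, _, hsorted p₀ hp₀ a₀ ha₀ hg₀, rfl⟩
  have hupper : ∀ q, 0 < q → (∃ a, Feasible b k q a ∧ flexGini k a ≤ g) → q ≤ p :=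
    fun q hq ⟨a', ha', hg'⟩ => hgreatest ⟨_, hsorted q hq a' ha' hg', rfl⟩
  exact ⟨p, a, hmono, ha, hg, ⟨hp₀.trans_le (hupper p₀ hp₀ ⟨a₀, ha₀, hg₀⟩), a, ha, hg⟩,
    fun q ⟨hq, hqa⟩ => hupper q hq hqa⟩

noncomputable def uniformTop (n k : ℕ) : Fin n → ℝ :=
  fun i => if n - k ≤ (i : ℕ) then (k : ℝ)⁻¹ else 0

lemma monotone_uniformTop (n k : ℕ) : Monotone (uniformTop n k) := by
  intro i j hij
  unfold uniformTop
  split_ifs <;> first | rfl | positivity | omega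

lemma uniformTop_comp_topIdx {n k : ℕ} (hkn : k ≤ n) :
    uniformTop n k ∘ topIdx hkn = fun _ => (k : ℝ)⁻¹ :=
  funext fun _ => if_pos (Nat.le_add_right _ _)

lemma flexGini_uniformTop {n k : ℕ} (hk : 1 ≤ k) (hkn : k ≤ n) :
    flexGini k (uniformTop n k) = 0 := by
  rw [flexGini_of_monotone hkn (monotone_uniformTop n k), uniformTop_comp_topIdx,
    gini_const (by omega) (by positivity)]

lemma feasible_uniformTop {n k : ℕ} {b : Fin n → ℝ} (hb : Monotone b) (hnn : ∀ i, 0 ≤ b i)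
    (hkn : k ≤ n) (hnk : n - k < n) :
    Feasible b k (k * b ⟨n - k, hnk⟩) (uniformTop n k) := by
  have hk0 : (k : ℝ) ≠ 0 := by
    rw [Nat.cast_ne_zero]
    omega
  have hzero : ∀ i : Fin n, (i : ℕ) < n - k → uniformTop n k i = 0 :=
    fun i hi => if_neg (by omega)
  refine (monotone_uniformTop n k).feasible_iff.mpr ⟨fun _ => ?_, ?_, fun i => ?_, hzero⟩
  · unfold uniformTop
    split_ifs <;> positivity
  · rw [← sum_topIdx_eq_sum hkn hzero, ← Function.comp_def, uniformTop_comp_topIdx]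
    simp [hk0]
  · unfold uniformTop
    split_ifs with hi
    · rw [inv_mul_cancel_left₀ hk0]
      exact hb (Fin.le_def.mpr hi)
    · rw [zero_mul]
      exact hnn i

/-- For a winner number `k` with `b_{n-k+1} > 0` and a Gini cap `g ∈ (0,1)`,
the set `{p > 0 : g*_k(p) ≤ g}` has a maximum element `p*_k`; moreover
`p*_k ∈ [k·b_{n-k+1}, ∑_{i=n-k+1}^n b_i]`, at `p*_k` a feasible allocation with flexible Gini
index at most `g` exists, and for every `p > p*_k` no such allocation exists. -/
theorem maxPrice_exists {n : ℕ} (b : Fin n → ℝ) (hmono : Monotone b) (hnn : ∀ i, 0 ≤ b i)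
    (k : ℕ) (hk1 : 1 ≤ k) (hkn : k ≤ n) (hpos : 0 < b ⟨n - k, by omega⟩)
    (g : ℝ) (hg : g ∈ Set.Ioo (0 : ℝ) 1) :
    ∃ pstar : ℝ,
      IsGreatest {p : ℝ | 0 < p ∧ gStar b k p ≤ g} pstar ∧
      pstar ∈ Set.Icc ((k : ℝ) * b ⟨n - k, by omega⟩)
        (∑ i ∈ Finset.univ.filter (fun i : Fin n => n - k ≤ (i : ℕ)), b i) ∧
      (∃ a, Feasible b k pstar a ∧ flexGini k a ≤ g) ∧
      (∀ p : ℝ, pstar < p → ¬ ∃ a, Feasible b k p a ∧ flexGini k a ≤ g) := by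
  have hset : {p : ℝ | 0 < p ∧ gStar b k p ≤ g} =
      {p | 0 < p ∧ ∃ a, Feasible b k p a ∧ flexGini k a ≤ g} :=
    Set.ext fun p => and_congr_right fun hp => gStar_le_iff hmono hp hkn hg.2
  have hp₀ : 0 < (k : ℝ) * b ⟨n - k, by omega⟩ := mul_pos (by positivity) hpos
  have huniform : ∃ a, Feasible b k _ a ∧ flexGini k a ≤ g :=
    ⟨_, feasible_uniformTop hmono hnn hkn (by omega),
      (flexGini_uniformTop hk1 hkn).trans_le hg.1.le⟩
  obtain ⟨pstar, a, ha, hfeas, hgini, hgreatest⟩ :=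
    exists_isGreatest_price hmono hkn ⟨_, hp₀, huniform⟩
  rw [hset]
  exact ⟨pstar, hgreatest, ⟨hgreatest.2 ⟨hp₀, huniform⟩, hfeas.le_sum_filter ha⟩,
    ⟨a, hfeas, hgini⟩,
    fun p hp hex => hp.not_ge (hgreatest.2 ⟨hgreatest.1.1.trans hp, hex⟩)⟩
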